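/- In the basilica group acting on X = {x,y}, the element aba satisfies (aba)|_x = b and (aba)|_y = ba, with aba·x = x and aba·y = y; moreover |F_{aba}^k| = 2^{k−2} for k ≥ 2, and hence c_{aba} = 1/4. -/
import Mathlib


mutual
/-- The generator `a` of the basilica group acting on words over `X = {x,y}` (encoded
as `Bool` with `x = false`, `y = true`): `a·(xw) = y(b·w)`, `a·(yw) = xw`. -/
def basA : List Bool → List Bool
  | [] => []
  | false :: w => true :: basB w
  | true :: w => false :: w
/-- The generator `b`: `b·(xw) = x(a·w)`, `b·(yw) = yw`. -/
def basB : List Bool → List Bool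
  | [] => []
  | false :: w => false :: basA w
  | true :: w => true :: w
end

/-- The restriction `f|_x` of a (length- and prefix-preserving) transformation of words:
`f|_x (w)` is the tail of `f (x :: w)`. -/
def restr (f : List Bool → List Bool) (x : Bool) : List Bool → List Bool :=
  fun w => (f (x :: w)).tail

/-- The restriction `f|_v` of a transformation of words to a word `v`. -/
def restrW : (List Bool → List Bool) → List Bool → (List Bool → List Bool)
  | f, [] => f
  | f, x :: v => restrW (restr f x) v

/-- `wordFixCard f k` is the cardinality `|F_f^k|` of the set
`F_f^k = {v ∈ X^k : f·v = v and f|_v = e}`. -/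
noncomputable def wordFixCard (f : List Bool → List Bool) (k : ℕ) : ℕ :=
  Nat.card {v : List Bool // v.length = k ∧ f v = v ∧ restrW f v = id}

open Filter

lemma restr_id (x : Bool) : restr id x = id := by funext w; simp [restr]

lemma restrW_id (v : List Bool) : restrW id v = id := by
  induction v with
  | nil => rfl
  | cons x t ih => simp [restrW, restr_id, ih]

lemma aba_false (w : List Bool) :
    (basA ∘ basB ∘ basA) (false :: w) = false :: basB w := by
  simp [basA, basB]

lemma aba_true (w : List Bool) :
    (basA ∘ basB ∘ basA) (true :: w) = true :: (basB ∘ basA) w := by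
  simp [basA, basB]

lemma restr_aba_false : restr (basA ∘ basB ∘ basA) false = basB := by
  funext w; simp [restr, basA, basB]

lemma restr_aba_true : restr (basA ∘ basB ∘ basA) true = basB ∘ basA := by
  funext w; simp [restr, basA, basB]

lemma restr_basB_false : restr basB false = basA := by
  funext w; simp [restr, basB]

lemma restr_basB_true : restr basB true = id := by
  funext w; simp [restr, basB]

lemma not_basA (u : List Bool) : ¬ (basA u = u ∧ restrW basA u = id) := by
  rintro ⟨h1, h2⟩
  match u with
  | [] =>
      have := congrFun h2 [false]
      simp [restrW, basA] at this
  | false :: t => simp [basA] at h1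
  | true :: t => simp [basA] at h1

lemma ba_false (w : List Bool) : (basB ∘ basA) (false :: w) = true :: basB w := by
  simp [basA, basB]

lemma ba_true (w : List Bool) : (basB ∘ basA) (true :: w) = false :: basA w := by
  simp [basA, basB]

lemma not_ba (u : List Bool) : ¬ ((basB ∘ basA) u = u ∧ restrW (basB ∘ basA) u = id) := by
  rintro ⟨h1, h2⟩
  match u with
  | [] =>
      have := congrFun h2 [false]
      simp [restrW, basA, basB] at this
  | false :: t => rw [ba_false] at h1; simp at h1
  | true :: t => rw [ba_true] at h1; simp at h1

lemma aba_mem_iff (v : List Bool) :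
    ((basA ∘ basB ∘ basA) v = v ∧ restrW (basA ∘ basB ∘ basA) v = id) ↔
      ∃ u, v = false :: true :: u := by
  constructor
  · rintro ⟨h1, h2⟩
    match v with
    | [] =>
        exfalso
        have := congrFun h2 [true, false]
        simp [restrW, basA, basB] at this
    | false :: [] =>
        exfalso
        have h2' : restrW (basA ∘ basB ∘ basA) [false] = basB := by
          simp [restrW, restr_aba_false]
        rw [h2'] at h2
        have := congrFun h2.symm [false, false]
        simp [basA, basB] at this
    | false :: false :: t =>
        exfalso
        rw [aba_false] at h1
        simp [basB] at h1
        exact not_basA t ⟨h1, by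
          have : restrW (basA ∘ basB ∘ basA) (false :: false :: t) = restrW basA t := by
            simp [restrW, restr_aba_false, restr_basB_false]
          rw [← this]; exact h2⟩
    | false :: true :: t => exact ⟨t, rfl⟩
    | true :: t =>
        exfalso
        rw [aba_true] at h1
        simp at h1
        exact not_ba t ⟨h1, by
          have : restrW (basA ∘ basB ∘ basA) (true :: t) = restrW (basB ∘ basA) t := by
            simp [restrW, restr_aba_true]
          rw [← this]; exact h2⟩
  · rintro ⟨u, rfl⟩
    constructor
    · rw [aba_false]; simp [basB]
    · have : restrW (basA ∘ basB ∘ basA) (false :: true :: u) = restrW id u := by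
        simp [restrW, restr_aba_false, restr_basB_true]
      rw [this, restrW_id]

lemma card_len (m : ℕ) : Nat.card {u : List Bool // u.length = m} = 2 ^ m := by
  have e : {u : List Bool // u.length = m} ≃ (Fin m → Bool) :=
    (Equiv.refl (List.Vector Bool m)).trans (Equiv.vectorEquivFin Bool m)
  rw [Nat.card_congr e]
  simp [Nat.card_eq_fintype_card]

lemma wordFixCard_aba (k : ℕ) (hk : 2 ≤ k) :
    wordFixCard (basA ∘ basB ∘ basA) k = 2 ^ (k - 2) := by
  obtain ⟨m, rfl⟩ : ∃ m, k = m + 2 := ⟨k - 2, by omega⟩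
  have e : {v : List Bool // v.length = m + 2 ∧ (basA ∘ basB ∘ basA) v = v ∧
      restrW (basA ∘ basB ∘ basA) v = id} ≃ {u : List Bool // u.length = m} := by
    refine
      { toFun := fun v => ⟨v.1.tail.tail, ?_⟩
        invFun := fun u => ⟨false :: true :: u.1, ?_, (aba_mem_iff _).2 ⟨u.1, rfl⟩⟩
        left_inv := ?_
        right_inv := ?_ }
    · obtain ⟨u, hu⟩ := (aba_mem_iff v.1).1 v.2.2
      have hl := v.2.1
      rw [hu] at hl ⊢
      simpa using hl
    · simp [u.2]
    · rintro ⟨v, hv⟩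
      obtain ⟨u, rfl⟩ := (aba_mem_iff v).1 hv.2
      rfl
    · rintro ⟨u, hu⟩; rfl
  rw [wordFixCard, Nat.card_congr e, card_len]
  norm_num


/-- In the basilica group action on `X = {x,y}`, the element `aba` satisfies
`aba·(xw) = x(b·w)` and `aba·(yw) = y(ba·w)`, i.e. `aba·x = x`, `aba·y = y`,
`(aba)|_x = b` and `(aba)|_y = ba`; moreover `|F_{aba}^k| = 2^{k−2}` for `k ≥ 2`,
and hence `c_{aba} = 1/4`. -/
theorem basilica_aba :
    (∀ w, (basA ∘ basB ∘ basA) (false :: w) = false :: basB w) ∧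
    (∀ w, (basA ∘ basB ∘ basA) (true :: w) = true :: (basB ∘ basA) w) ∧
    restr (basA ∘ basB ∘ basA) false = basB ∧
    restr (basA ∘ basB ∘ basA) true = basB ∘ basA ∧
    (∀ k : ℕ, 2 ≤ k → wordFixCard (basA ∘ basB ∘ basA) k = 2 ^ (k - 2)) ∧
    Tendsto (fun k : ℕ => (wordFixCard (basA ∘ basB ∘ basA) k : ℝ) / 2 ^ k)
      atTop (nhds (1 / 4)) := by
  refine ⟨aba_false, aba_true, restr_aba_false, restr_aba_true, wordFixCard_aba, ?_⟩
  refine Tendsto.congr' ?_ tendsto_const_nhds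
  filter_upwards [eventually_ge_atTop 2] with k hk
  obtain ⟨m, rfl⟩ : ∃ m, k = m + 2 := ⟨k - 2, by omega⟩
  rw [wordFixCard_aba _ hk]
  have hc : ((2 ^ (m + 2 - 2) : ℕ) : ℝ) = 2 ^ m := by norm_num
  have h2 : (2 : ℝ) ^ (m + 2) = 2 ^ m * 4 := by rw [pow_add]; norm_num
  rw [hc, h2, eq_div_iff (by positivity)]
  ring
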